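/- The homogenized matrix A⁰ defined by A⁰λ = mean over Y of A∇ω_λ, where ω_λ solves the periodic cell problem −div(A∇ω_λ) = 0 in Y with ω_λ − λ·y being Y-periodic with zero mean, satisfies the ellipticity bounds (A⁰λ, λ) ≥ α|λ|² and |A⁰λ| ≤ (β²/α)|λ| for all λ ∈ ℝ^N, whenever A satisfies (Aξ, ξ) ≥ α|ξ|² and |Aξ| ≤ β|ξ|. -/

import Mathlib

/-!
Write `G = ∇ω_λ`; as `|Y| = 1`, means over `Y` are integrals against a probability measure.
Since `ω_λ - λ·y` is periodic, its gradient `G - λ` integrates to zero over `Y` (the two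
faces `yᵢ = 0` and `yᵢ = 1` cancel in the divergence theorem), so `∫ G = λ`. Testing the cell
problem with `ω_λ - λ·y` itself gives `∫ (AG, G) = (A⁰λ, λ)`. Hence, by ellipticity and
Jensen, `α|λ|² ≤ α ∫ |G|² ≤ (A⁰λ, λ)`, while the bound on `A` and Jensen again give
`|A⁰λ|² ≤ β² ∫ |G|² ≤ (β²/α) |A⁰λ| |λ|`.
-/

open MeasureTheory
open scoped RealInnerProductSpace

/-- The unit cell `Y = (0,1)^N` (up to a null set). -/
def unitCell (N : ℕ) : Set (EuclideanSpace ℝ (Fin N)) :=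
  {y | ∀ i, y i ∈ Set.Ico (0 : ℝ) 1}

/-- `Y`-periodicity: invariance under integer translations. -/
def IsYPeriodic {N : ℕ} (f : EuclideanSpace ℝ (Fin N) → ℝ) : Prop :=
  ∀ (x : EuclideanSpace ℝ (Fin N)) (z : Fin N → ℤ),
    f (x + (EuclideanSpace.equiv (Fin N) ℝ).symm (fun i => (z i : ℝ))) = f x

section Energy

variable {Ω E : Type*} [MeasurableSpace Ω] {μ : Measure Ω}
  [NormedAddCommGroup E] [InnerProductSpace ℝ E]

variable [CompleteSpace E] in
lemma mul_integral_sq_norm_le_inner_integral {G B : Ω → E} {lam : E} {α β : ℝ}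
    (hG : MemLp G 2 μ) (hB : Integrable B μ)
    (hell : ∀ᵐ x ∂μ, α * ‖G x‖ ^ 2 ≤ ⟪B x, G x⟫) (hbd : ∀ᵐ x ∂μ, ‖B x‖ ≤ β * ‖G x‖)
    (horth : ∫ x, ⟪B x, G x - lam⟫ ∂μ = 0) :
    α * ∫ x, ‖G x‖ ^ 2 ∂μ ≤ ⟪∫ x, B x ∂μ, lam⟫ := by
  have hGsq : Integrable (fun x => ‖G x‖ ^ 2) μ := hG.integrable_norm_pow two_ne_zero
  have hBG : Integrable (fun x => ⟪B x, G x⟫) μ := by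
    refine (hGsq.const_mul β).mono' (hB.1.inner hG.1) (hbd.mono fun x hx => ?_)
    calc ‖⟪B x, G x⟫‖ ≤ ‖B x‖ * ‖G x‖ := norm_inner_le_norm _ _
      _ ≤ β * ‖G x‖ * ‖G x‖ := by gcongr
      _ = β * ‖G x‖ ^ 2 := by ring
  have henergy : ∫ x, ⟪B x, G x⟫ ∂μ = ⟪∫ x, B x ∂μ, lam⟫ := by
    simp only [inner_sub_right] at horth
    rw [integral_sub hBG (hB.inner_const lam), sub_eq_zero] at horth
    rw [horth, real_inner_comm, ← integral_inner hB]
    simp_rw [real_inner_comm lam]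
  rw [← henergy, ← integral_const_mul]
  exact integral_mono_ae (hGsq.const_mul α) hBG hell

variable [IsProbabilityMeasure μ]

lemma sq_integral_le_integral_sq {f : Ω → ℝ} (hf : MemLp f 2 μ) :
    (∫ x, f x ∂μ) ^ 2 ≤ ∫ x, f x ^ 2 ∂μ := by
  have := ProbabilityTheory.variance_nonneg f μ
  rw [ProbabilityTheory.variance_eq_sub hf] at this
  simpa [sub_nonneg] using this

lemma sq_norm_integral_le_integral_sq_norm {G : Ω → E} (hG : MemLp G 2 μ) :
    ‖∫ x, G x ∂μ‖ ^ 2 ≤ ∫ x, ‖G x‖ ^ 2 ∂μ :=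
  (pow_le_pow_left₀ (norm_nonneg _) (norm_integral_le_integral_norm G) 2).trans
    (sq_integral_le_integral_sq hG.norm)

lemma sq_norm_integral_le_of_norm_le {G B : Ω → E} {β : ℝ} (hG : MemLp G 2 μ)
    (hB : Integrable B μ) (hbd : ∀ᵐ x ∂μ, ‖B x‖ ≤ β * ‖G x‖) :
    ‖∫ x, B x ∂μ‖ ^ 2 ≤ β ^ 2 * ∫ x, ‖G x‖ ^ 2 ∂μ := by
  have hBG : ‖∫ x, B x ∂μ‖ ≤ β * ∫ x, ‖G x‖ ∂μ := by
    rw [← integral_const_mul]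
    exact (norm_integral_le_integral_norm B).trans
      (integral_mono_ae hB.norm ((hG.integrable one_le_two).norm.const_mul β) hbd)
  calc ‖∫ x, B x ∂μ‖ ^ 2 ≤ (β * ∫ x, ‖G x‖ ∂μ) ^ 2 := pow_le_pow_left₀ (norm_nonneg _) hBG 2
    _ = β ^ 2 * (∫ x, ‖G x‖ ∂μ) ^ 2 := by ring
    _ ≤ β ^ 2 * ∫ x, ‖G x‖ ^ 2 ∂μ := by gcongr; exact sq_integral_le_integral_sq hG.norm

variable [CompleteSpace E] in
theorem ellipticity_bounds_of_integral_eq_of_orthogonal {G B : Ω → E} {lam : E} {α β : ℝ}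
    (hα : 0 < α) (hG : MemLp G 2 μ) (hB : Integrable B μ) (hmean : ∫ x, G x ∂μ = lam)
    (hell : ∀ᵐ x ∂μ, α * ‖G x‖ ^ 2 ≤ ⟪B x, G x⟫) (hbd : ∀ᵐ x ∂μ, ‖B x‖ ≤ β * ‖G x‖)
    (horth : ∫ x, ⟪B x, G x - lam⟫ ∂μ = 0) :
    α * ‖lam‖ ^ 2 ≤ ⟪∫ x, B x ∂μ, lam⟫ ∧ ‖∫ x, B x ∂μ‖ ≤ β ^ 2 / α * ‖lam‖ := by
  have hαS := mul_integral_sq_norm_le_inner_integral hG hB hell hbd horth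
  have hlamS : ‖lam‖ ^ 2 ≤ ∫ x, ‖G x‖ ^ 2 ∂μ := hmean ▸ sq_norm_integral_le_integral_sq_norm hG
  refine ⟨(mul_le_mul_of_nonneg_left hlamS hα.le).trans hαS, ?_⟩
  have hMS := sq_norm_integral_le_of_norm_le hG hB hbd
  have hSM := hαS.trans (real_inner_le_norm _ _)
  have hM := norm_nonneg (∫ x, B x ∂μ)
  generalize ‖∫ x, B x ∂μ‖ = M at hM hMS hSM ⊢
  rw [div_mul_eq_mul_div, le_div_iff₀ hα]
  rcases hM.eq_or_lt with rfl | hMpos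
  · rw [zero_mul]
    positivity
  · refine le_of_mul_le_mul_left ?_ hMpos
    nlinarith [mul_le_mul_of_nonneg_left hSM (sq_nonneg β)]

end Energy

section Gradient

variable {F : Type*} [NormedAddCommGroup F] [InnerProductSpace ℝ F] [CompleteSpace F]

lemma measurable_gradient [MeasurableSpace F] [BorelSpace F] (f : F → ℝ) :
    Measurable (gradient f) :=
  (InnerProductSpace.toDual ℝ F).symm.continuous.measurable.comp (measurable_fderiv ℝ f)

lemma gradient_sub_inner {f : F → ℝ} {x : F} (hf : DifferentiableAt ℝ f x) (v : F) :
    gradient (fun y => f y - ⟪v, y⟫) x = gradient f x - v := by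
  have hinner : HasFDerivAt (fun y => ⟪v, y⟫) (innerSL ℝ v) x := (innerSL ℝ v).hasFDerivAt
  refine ext_inner_right ℝ fun w => ?_
  rw [inner_gradient_left, (hf.hasFDerivAt.fun_sub hinner).fderiv, inner_sub_left,
    inner_gradient_left, sub_apply, innerSL_apply_apply, real_inner_comm]

end Gradient

lemma integral_Icc_fderiv_single_eq_zero_of_periodic {n : ℕ} {a b : Fin (n + 1) → ℝ}
    (hle : a ≤ b) {h : (Fin (n + 1) → ℝ) → ℝ} (hd : Differentiable ℝ h) (i : Fin (n + 1))
    (hper : ∀ x, h (x + Pi.single i (b i - a i)) = h x)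
    (hint : IntegrableOn (fun x => fderiv ℝ h x (Pi.single i 1)) (Set.Icc a b)) :
    ∫ x in Set.Icc a b, fderiv ℝ h x (Pi.single i 1) = 0 := by
  have hsum : ∀ x, ∑ j, Pi.single (M := fun _ => _ →L[ℝ] ℝ) i (fderiv ℝ h x) j (Pi.single j 1) =
      fderiv ℝ h x (Pi.single i 1) := fun x =>
    (Fintype.sum_eq_single i fun j hj => by simp [hj]).trans (by simp)
  have hdiv := integral_divergence_of_hasFDerivAt_off_countable' a b hle
    (Pi.single i h) (fun j x => Pi.single (M := fun _ => _ →L[ℝ] ℝ) i (fderiv ℝ h x) j) ∅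
    Set.countable_empty
    (fun j => by
      rcases eq_or_ne j i with rfl | hj
      · simpa using hd.continuous.continuousOn
      · rw [Pi.single_eq_of_ne hj]
        exact continuousOn_const)
    (fun x _ j => by
      rcases eq_or_ne j i with rfl | hj
      · simpa using (hd x).hasFDerivAt
      · rw [Pi.single_eq_of_ne hj, Pi.single_eq_of_ne hj]
        exact hasFDerivAt_const 0 x)
    (by simpa only [hsum] using hint)
  simp only [hsum] at hdiv
  rw [hdiv]
  refine Finset.sum_eq_zero fun j _ => ?_
  rcases eq_or_ne j i with rfl | hj
  · have hface : ∀ x, j.insertNth (b j) x = j.insertNth (a j) x + Pi.single j (b j - a j) :=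
      fun x => eq_add_of_sub_eq' (Fin.insertNth_sub_same _ _ _ _)
    simp [hface, hper]
  · simp [hj]

lemma measurePreserving_toLp_unitCell (N : ℕ) :
    MeasurePreserving (WithLp.toLp 2 : (Fin N → ℝ) → EuclideanSpace ℝ (Fin N))
      (volume.restrict (Set.Icc 0 1)) (volume.restrict (unitCell N)) := by
  have hpre : WithLp.toLp 2 ⁻¹' unitCell N = Set.univ.pi fun _ : Fin N => Set.Ico (0 : ℝ) 1 := by
    ext x; simp [unitCell]
  have h := (PiLp.volume_preserving_toLp (Fin N)).restrict_preimage_emb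
    (MeasurableEquiv.toLp 2 (Fin N → ℝ)).measurableEmbedding (unitCell N)
  have hae : (Set.univ.pi fun _ : Fin N => Set.Ico (0 : ℝ) 1) =ᵐ[volume] Set.Icc 0 1 :=
    Measure.univ_pi_Ico_ae_eq_Icc
  rwa [hpre, Measure.restrict_congr_set hae] at h

instance isProbabilityMeasure_restrict_unitCell (N : ℕ) :
    IsProbabilityMeasure (volume.restrict (unitCell N)) := by
  rw [← (measurePreserving_toLp_unitCell N).map_eq]
  have : IsProbabilityMeasure (volume.restrict (Set.Icc (0 : Fin N → ℝ) 1)) :=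
    ⟨by simp [Real.volume_Icc_pi]⟩
  exact Measure.isProbabilityMeasure_map (measurePreserving_toLp_unitCell N).measurable.aemeasurable

theorem integral_unitCell_gradient_eq_zero {N : ℕ} {g : EuclideanSpace ℝ (Fin N) → ℝ}
    (hg : Differentiable ℝ g) (hper : IsYPeriodic g)
    (hint : IntegrableOn (gradient g) (unitCell N)) :
    ∫ y in unitCell N, gradient g y = 0 := by
  cases N with
  | zero => exact Subsingleton.elim _ _
  | succ n =>
    set L := (EuclideanSpace.equiv (Fin (n + 1)) ℝ).symm
    have hmp := measurePreserving_toLp_unitCell (n + 1)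
    have hemb := (MeasurableEquiv.toLp 2 (Fin (n + 1) → ℝ)).measurableEmbedding
    have hchain : ∀ i x, fderiv ℝ (g ∘ L) x (Pi.single i 1) = gradient g (L x) i := by
      intro i x
      rw [L.comp_right_fderiv, ContinuousLinearMap.comp_apply]
      change fderiv ℝ g (L x) (WithLp.toLp 2 (Pi.single i 1)) = _
      rw [PiLp.toLp_single, ← inner_gradient_left, EuclideanSpace.inner_single_right]
      simp
    have hperL : ∀ i x, (g ∘ L) (x + Pi.single i 1) = (g ∘ L) x := by
      intro i x
      have hcast : (fun j => ((Pi.single i 1 : Fin (n + 1) → ℤ) j : ℝ)) = Pi.single i 1 := by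
        ext j; by_cases hj : j = i <;> simp [hj]
      rw [Function.comp_apply, map_add, ← hcast]
      exact hper (L x) (Pi.single i 1)
    ext i
    have hcoord := (EuclideanSpace.proj (𝕜 := ℝ) i).integrable_comp hint
    calc (∫ y in unitCell (n + 1), gradient g y) i
        = ∫ y in unitCell (n + 1), gradient g y i :=
          ((EuclideanSpace.proj (𝕜 := ℝ) i).integral_comp_comm hint).symm
      _ = ∫ x in Set.Icc 0 1, gradient g (L x) i :=
          (hmp.integral_comp hemb _).symm
      _ = ∫ x in Set.Icc 0 1, fderiv ℝ (g ∘ L) x (Pi.single i 1) := by simp only [hchain]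
      _ = 0 := by
        refine integral_Icc_fderiv_single_eq_zero_of_periodic zero_le_one
          (hg.comp L.differentiable) i (by simpa using hperL i) ?_
        simp only [hchain]
        exact (hmp.integrable_comp_emb hemb).mpr hcoord

theorem stmt6_general {N : ℕ}
    (A : EuclideanSpace ℝ (Fin N) →
      EuclideanSpace ℝ (Fin N) →L[ℝ] EuclideanSpace ℝ (Fin N))
    (α β : ℝ) (hα : 0 < α)
    (hell : ∀ᵐ y ∂(volume.restrict (unitCell N)),
      ∀ ξ : EuclideanSpace ℝ (Fin N), α * ‖ξ‖ ^ 2 ≤ ⟪A y ξ, ξ⟫)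
    (hbd : ∀ᵐ y ∂(volume.restrict (unitCell N)),
      ∀ ξ : EuclideanSpace ℝ (Fin N), ‖A y ξ‖ ≤ β * ‖ξ‖)
    (ω : EuclideanSpace ℝ (Fin N) → EuclideanSpace ℝ (Fin N) → ℝ)
    (hdiff : ∀ lam, Differentiable ℝ (ω lam))
    (hper : ∀ lam, IsYPeriodic (fun y => ω lam y - ⟪lam, y⟫))
    (hgradint : ∀ lam,
      IntegrableOn (fun y => ‖gradient (ω lam) y‖ ^ 2) (unitCell N) volume)
    (hAgradint : ∀ lam,
      IntegrableOn (fun y => A y (gradient (ω lam) y)) (unitCell N) volume)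
    (hweak : ∀ lam, ∀ φ : EuclideanSpace ℝ (Fin N) → ℝ,
      Differentiable ℝ φ → IsYPeriodic φ →
      ∫ y in unitCell N, ⟪A y (gradient (ω lam) y), gradient φ y⟫ = 0) :
    ∀ lam : EuclideanSpace ℝ (Fin N),
      α * ‖lam‖ ^ 2 ≤ ⟪∫ y in unitCell N, A y (gradient (ω lam) y), lam⟫ ∧
      ‖∫ y in unitCell N, A y (gradient (ω lam) y)‖ ≤ β ^ 2 / α * ‖lam‖ := by
  intro lam
  set g := fun y => ω lam y - ⟪lam, y⟫
  have hgd : Differentiable ℝ g := (hdiff lam).sub (innerSL ℝ lam).differentiable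
  have hgrad : gradient g = fun y => gradient (ω lam) y - lam :=
    funext fun y => gradient_sub_inner (hdiff lam y) lam
  have hG : MemLp (gradient (ω lam)) 2 (volume.restrict (unitCell N)) :=
    (memLp_two_iff_integrable_sq_norm (measurable_gradient _).aestronglyMeasurable).mpr
      (hgradint lam)
  have hGi := hG.integrable one_le_two
  have hGmean : ∫ y in unitCell N, gradient (ω lam) y = lam := by
    have h := integral_unitCell_gradient_eq_zero hgd (hper lam)
      (hgrad ▸ hGi.sub (integrable_const lam))
    rwa [hgrad, integral_sub hGi (integrable_const lam), integral_const, probReal_univ,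
      one_smul, sub_eq_zero] at h
  refine ellipticity_bounds_of_integral_eq_of_orthogonal hα hG (hAgradint lam) hGmean
    (hell.mono fun y hy => hy _) (hbd.mono fun y hy => hy _) ?_
  simpa only [hgrad] using hweak lam g hgd (hper lam)

/-- Ellipticity bounds on the homogenized matrix: if `A` is measurable with
`(A(y)ξ, ξ) ≥ α|ξ|²` and `|A(y)ξ| ≤ β|ξ|` a.e. on the unit cell `Y`, and for
each `λ` the corrector `ω_λ` solves the periodic cell problem
`−div(A∇ω_λ) = 0` in `Y` (in the weak form against periodic test functions),
with `ω_λ − λ·y` `Y`-periodic and of zero mean over `Y`, then the homogenized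
matrix `A⁰λ = mean_Y (A∇ω_λ)` satisfies `(A⁰λ, λ) ≥ α|λ|²` and
`|A⁰λ| ≤ (β²/α)|λ|`. -/
theorem stmt6 {N : ℕ} (hN : 0 < N)
    (A : EuclideanSpace ℝ (Fin N) →
      EuclideanSpace ℝ (Fin N) →L[ℝ] EuclideanSpace ℝ (Fin N))
    (α β : ℝ) (hα : 0 < α) (hβ : α < β)
    (hell : ∀ᵐ y ∂(volume.restrict (unitCell N)),
      ∀ ξ : EuclideanSpace ℝ (Fin N), α * ‖ξ‖ ^ 2 ≤ ⟪A y ξ, ξ⟫)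
    (hbd : ∀ᵐ y ∂(volume.restrict (unitCell N)),
      ∀ ξ : EuclideanSpace ℝ (Fin N), ‖A y ξ‖ ≤ β * ‖ξ‖)
    (ω : EuclideanSpace ℝ (Fin N) → EuclideanSpace ℝ (Fin N) → ℝ)
    (hdiff : ∀ lam, Differentiable ℝ (ω lam))
    (hper : ∀ lam, IsYPeriodic (fun y => ω lam y - ⟪lam, y⟫))
    (hmean : ∀ lam, ∫ y in unitCell N, (ω lam y - ⟪lam, y⟫) = 0)
    (hgradint : ∀ lam,
      IntegrableOn (fun y => ‖gradient (ω lam) y‖ ^ 2) (unitCell N) volume)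
    (hAgradint : ∀ lam,
      IntegrableOn (fun y => A y (gradient (ω lam) y)) (unitCell N) volume)
    (hweak : ∀ lam, ∀ φ : EuclideanSpace ℝ (Fin N) → ℝ,
      Differentiable ℝ φ → IsYPeriodic φ →
      ∫ y in unitCell N, ⟪A y (gradient (ω lam) y), gradient φ y⟫ = 0) :
    ∀ lam : EuclideanSpace ℝ (Fin N),
      α * ‖lam‖ ^ 2 ≤ ⟪∫ y in unitCell N, A y (gradient (ω lam) y), lam⟫ ∧
      ‖∫ y in unitCell N, A y (gradient (ω lam) y)‖ ≤ β ^ 2 / α * ‖lam‖ :=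
  stmt6_general A α β hα hell hbd ω hdiff hper hgradint hAgradint hweak
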